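/- arXiv:2410.05473 — 2 statements merged into one kernel-verified Lean document; each statement's English description precedes it below -/
import Mathlib

section
/- Let f : 𝕋^d → 𝕋^d be volume-preserving with Λ = log sup_x |(Df_x)^{-1}|, let b ∈ H¹ be mean-zero with ‖b‖_{L²} = 1, and let ℒ_{f,κ} = e^{κΔ}∘ℒ_f. Define τ_κ = min{n ≥ 0 : ‖ℒ_{f,κ}ⁿ b‖_{L²}² < ½}. Then there is a constant C > 0, independent of κ ∈ (0,1], such that τ_κ ≥ (1/(2Λ)) |log κ| − C. -/
/-- Euclidean norm of an integer wavenumber in ℤ^d. -/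
noncomputable def znorm {d : ℕ} (k : Fin d → ℤ) : ℝ :=
  Real.sqrt (∑ i, ((k i : ℝ)) ^ 2)

/-- The heat multiplier e^{-4π²κ|k|²}. -/
noncomputable def heatMul {d : ℕ} (κ : ℝ) (k : Fin d → ℤ) : ℝ :=
  Real.exp (-(4 * Real.pi ^ 2 * κ * znorm k ^ 2))

lemma znorm_sq_eq {d : ℕ} (k : Fin d → ℤ) : znorm k ^ 2 = ∑ i, ((k i : ℝ)) ^ 2 :=
  Real.sq_sqrt (Finset.sum_nonneg fun i _ => sq_nonneg _)

lemma one_le_znorm_sq {d : ℕ} {k : Fin d → ℤ} (hk : k ≠ 0) : 1 ≤ znorm k ^ 2 := by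
  rw [znorm_sq_eq]
  obtain ⟨i, hi⟩ := Function.ne_iff.mp hk
  have hi' : k i ≠ 0 := by simpa using hi
  have h1 : (1:ℝ) ≤ ((k i : ℝ)) ^ 2 := by
    have h2 : (1:ℤ) ≤ |k i| := Int.one_le_abs hi'
    have : (1:ℤ) ≤ (k i) ^ 2 := by nlinarith [sq_abs (k i)]
    exact_mod_cast this
  exact h1.trans (Finset.single_le_sum (fun j _ => sq_nonneg ((k j : ℝ))) (Finset.mem_univ i))

lemma summable_sq_of_h1 {d : ℕ} {c : (Fin d → ℤ) → ℂ}
    (h : Summable fun k : Fin d → ℤ => znorm k ^ 2 * ‖c k‖ ^ 2) :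
    Summable fun k : Fin d → ℤ => ‖c k‖ ^ 2 := by
  rw [← Finset.summable_compl_iff ({(0 : Fin d → ℤ)} : Finset _)]
  refine Summable.of_nonneg_of_le (fun x => sq_nonneg _) (fun x => ?_)
    (h.comp_injective Subtype.val_injective)
  have hx : (x : Fin d → ℤ) ≠ 0 := by
    have := x.2; simpa using this
  have h1 := one_le_znorm_sq hx
  show ‖c (x : Fin d → ℤ)‖ ^ 2 ≤ znorm (x : Fin d → ℤ) ^ 2 * ‖c (x : Fin d → ℤ)‖ ^ 2
  nlinarith [sq_nonneg ‖c (x : Fin d → ℤ)‖, mul_le_mul_of_nonneg_right h1 (sq_nonneg ‖c (x : Fin d → ℤ)‖)]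

lemma heatMul_pos {d : ℕ} (κ : ℝ) (k : Fin d → ℤ) : 0 < heatMul κ k := Real.exp_pos _

lemma heatMul_le_one {d : ℕ} {κ : ℝ} (hκ : 0 ≤ κ) (k : Fin d → ℤ) : heatMul κ k ≤ 1 := by
  rw [heatMul, Real.exp_le_one_iff]
  have := Real.pi_pos
  nlinarith [sq_nonneg (znorm k), sq_nonneg Real.pi, mul_nonneg (mul_nonneg (sq_nonneg Real.pi) hκ) (sq_nonneg (znorm k))]

lemma one_sub_heatMul_sq_le {d : ℕ} (κ : ℝ) (k : Fin d → ℤ) :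
    1 - heatMul κ k ^ 2 ≤ 8 * Real.pi ^ 2 * κ * znorm k ^ 2 := by
  have hsq : heatMul κ k ^ 2 = Real.exp (-(8 * Real.pi ^ 2 * κ * znorm k ^ 2)) := by
    rw [heatMul, sq, ← Real.exp_add]; congr 1; ring
  rw [hsq]
  have := Real.add_one_le_exp (-(8 * Real.pi ^ 2 * κ * znorm k ^ 2))
  linarith

/-- dissipation timescale: in the pulsed-diffusion model
g_{n+1} = e^{κΔ} ℒ_f g_n, with g₀ = b mean-zero, ‖b‖ = 1, b ∈ H¹, where ℒ_f is the
(L²-isometric) transfer operator of a volume-preserving diffeomorphism f satisfying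
the H¹ operator bound ‖ℒ_f‖_{H¹→H¹} ≤ e^Λ, the first time τ_κ at which ‖g_n‖² drops
below 1/2 satisfies τ_κ ≥ (1/(2Λ))|log κ| − C with C independent of κ ∈ (0,1].
Here `g n` are the Fourier coefficients of g_n and `A n` those of ℒ_f g_n. -/
theorem dissipation_timescale {d : ℕ} (Λ : ℝ) (hΛ : 0 < Λ)
    (b : (Fin d → ℤ) → ℂ) (hb0 : b 0 = 0)
    (hbnorm : (∑' k : Fin d → ℤ, ‖b k‖ ^ 2) = 1)
    (hbH1 : Summable fun k : Fin d → ℤ => znorm k ^ 2 * ‖b k‖ ^ 2) :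
    ∃ C : ℝ, 0 < C ∧ ∀ (κ : ℝ), 0 < κ → κ ≤ 1 →
      ∀ g A : ℕ → (Fin d → ℤ) → ℂ,
        g 0 = b →
        (∀ n k, g (n + 1) k = (heatMul κ k : ℂ) * A n k) →
        (∀ n, Summable fun k : Fin d → ℤ => znorm k ^ 2 * ‖g n k‖ ^ 2) →
        (∀ n, Summable fun k : Fin d → ℤ => znorm k ^ 2 * ‖A n k‖ ^ 2) →
        (∀ n, (∑' k : Fin d → ℤ, ‖A n k‖ ^ 2) = ∑' k : Fin d → ℤ, ‖g n k‖ ^ 2) →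
        (∀ n, (∑' k : Fin d → ℤ, znorm k ^ 2 * ‖A n k‖ ^ 2)
            ≤ Real.exp (2 * Λ) * ∑' k : Fin d → ℤ, znorm k ^ 2 * ‖g n k‖ ^ 2) →
        ∀ n : ℕ, (∑' k : Fin d → ℤ, ‖g n k‖ ^ 2) < 1 / 2 →
          (1 / (2 * Λ)) * |Real.log κ| - C ≤ (n : ℝ) := by
  have hπ := Real.pi_pos
  set M := ∑' k : Fin d → ℤ, znorm k ^ 2 * ‖b k‖ ^ 2 with hM
  have hMnn : 0 ≤ M := tsum_nonneg fun k => mul_nonneg (sq_nonneg _) (sq_nonneg _)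
  have hexpΛ : (1:ℝ) < Real.exp (2 * Λ) := Real.one_lt_exp_iff.mpr (by linarith)
  set R := Real.exp (2 * Λ) / (Real.exp (2 * Λ) - 1) with hR
  have hRpos : 0 < R := div_pos (Real.exp_pos _) (by linarith)
  set c := 1 / (16 * Real.pi ^ 2 * (M + 1) * R) with hc
  have hcpos : 0 < c := by positivity
  refine ⟨|Real.log c| / (2 * Λ) + 1, by positivity, ?_⟩
  intro κ hκ hκ1 g A hg0 hrec hgH1 hAH1 hAL2 hAH1le n hEn
  -- basic summability
  have sg : ∀ m, Summable fun k : Fin d → ℤ => ‖g m k‖ ^ 2 := fun m => summable_sq_of_h1 (hgH1 m)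
  have sA : ∀ m, Summable fun k : Fin d → ℤ => ‖A m k‖ ^ 2 := fun m => summable_sq_of_h1 (hAH1 m)
  have hgnorm : ∀ m k, ‖g (m + 1) k‖ ^ 2 = heatMul κ k ^ 2 * ‖A m k‖ ^ 2 := by
    intro m k
    rw [hrec m k, norm_mul, Complex.norm_real, Real.norm_eq_abs, abs_of_pos (heatMul_pos κ k), mul_pow]
  have sGA : ∀ m, Summable fun k : Fin d → ℤ => heatMul κ k ^ 2 * ‖A m k‖ ^ 2 := by
    intro m
    have := sg (m + 1)
    simpa only [hgnorm] using this
  -- H step : H(m+1) ≤ e^{2Λ} H m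
  have hHstep : ∀ m, (∑' k : Fin d → ℤ, znorm k ^ 2 * ‖g (m+1) k‖ ^ 2)
      ≤ Real.exp (2 * Λ) * ∑' k : Fin d → ℤ, znorm k ^ 2 * ‖g m k‖ ^ 2 := by
    intro m
    refine le_trans ?_ (hAH1le m)
    refine Summable.tsum_le_tsum (fun k => ?_) (hgH1 (m+1)) (hAH1 m)
    rw [hgnorm m k]
    have h1 := heatMul_le_one hκ.le k
    have h2 := heatMul_pos κ k
    have hsq : heatMul κ k ^ 2 ≤ 1 := by nlinarith
    have h3 : heatMul κ k ^ 2 * ‖A m k‖ ^ 2 ≤ ‖A m k‖ ^ 2 := by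
      nlinarith [mul_le_mul_of_nonneg_right hsq (sq_nonneg ‖A m k‖)]
    exact mul_le_mul_of_nonneg_left h3 (sq_nonneg (znorm k))
  -- H bound : H m ≤ e^{2Λ m} M
  have hHbound : ∀ m : ℕ, (∑' k : Fin d → ℤ, znorm k ^ 2 * ‖g m k‖ ^ 2)
      ≤ Real.exp (2 * Λ * m) * M := by
    intro m
    induction m with
    | zero => simp [hg0, hM]
    | succ m ih =>
      refine (hHstep m).trans ?_
      have hem : Real.exp (2 * Λ * ((m:ℝ) + 1)) = Real.exp (2 * Λ) * Real.exp (2 * Λ * m) := by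
        rw [← Real.exp_add]; ring_nf
      push_cast
      rw [hem]
      have := mul_le_mul_of_nonneg_left ih (Real.exp_pos (2 * Λ)).le
      linarith
  -- E step : E m − 8π²κ e^{2Λ} H m ≤ E (m+1)
  have hEstep : ∀ m, (∑' k : Fin d → ℤ, ‖g m k‖ ^ 2)
      - 8 * Real.pi ^ 2 * κ * (Real.exp (2 * Λ) * ∑' k : Fin d → ℤ, znorm k ^ 2 * ‖g m k‖ ^ 2)
      ≤ ∑' k : Fin d → ℤ, ‖g (m+1) k‖ ^ 2 := by
    intro m
    have e1 : (∑' k : Fin d → ℤ, ‖g (m+1) k‖ ^ 2)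
        = ∑' k : Fin d → ℤ, heatMul κ k ^ 2 * ‖A m k‖ ^ 2 := tsum_congr fun k => hgnorm m k
    have h1 : (∑' k : Fin d → ℤ, ‖g m k‖ ^ 2) - (∑' k : Fin d → ℤ, ‖g (m+1) k‖ ^ 2)
        = ∑' k : Fin d → ℤ, (‖A m k‖ ^ 2 - heatMul κ k ^ 2 * ‖A m k‖ ^ 2) := by
      rw [Summable.tsum_sub (sA m) (sGA m), hAL2 m, e1]
    have e3 : (∑' k : Fin d → ℤ, (‖A m k‖ ^ 2 - heatMul κ k ^ 2 * ‖A m k‖ ^ 2))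
        ≤ 8 * Real.pi ^ 2 * κ * ∑' k : Fin d → ℤ, znorm k ^ 2 * ‖A m k‖ ^ 2 := by
      rw [← tsum_mul_left]
      refine Summable.tsum_le_tsum (fun k => ?_) ((sA m).sub (sGA m)) ((hAH1 m).mul_left _)
      have h1 := one_sub_heatMul_sq_le κ k
      nlinarith [sq_nonneg ‖A m k‖, mul_le_mul_of_nonneg_right (one_sub_heatMul_sq_le κ k) (sq_nonneg ‖A m k‖)]
    have e4 := mul_le_mul_of_nonneg_left (hAH1le m)
      (show (0:ℝ) ≤ 8 * Real.pi ^ 2 * κ by positivity)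
    linarith
  -- E bound by induction
  have hEbound : ∀ m : ℕ, 1 - 8 * Real.pi ^ 2 * κ * M * R * Real.exp (2 * Λ * m)
      ≤ ∑' k : Fin d → ℤ, ‖g m k‖ ^ 2 := by
    intro m
    induction m with
    | zero =>
      have hE0 : (∑' k : Fin d → ℤ, ‖g 0 k‖ ^ 2) = 1 := by rw [hg0]; exact hbnorm
      rw [hE0]
      have : (0:ℝ) ≤ 8 * Real.pi ^ 2 * κ * M * R * Real.exp (2 * Λ * (0:ℕ)) := by positivity
      linarith
    | succ m ih =>
      have hRe : R * Real.exp (2 * Λ) = R + Real.exp (2 * Λ) := by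
        have hne : Real.exp (2 * Λ) - 1 ≠ 0 := by linarith
        rw [hR]; field_simp; ring
      have hem : Real.exp (2 * Λ * ((m:ℝ) + 1)) = Real.exp (2 * Λ * m) * Real.exp (2 * Λ) := by
        rw [← Real.exp_add]; ring_nf
      have h3 := mul_le_mul_of_nonneg_left (hHbound m)
        (show (0:ℝ) ≤ 8 * Real.pi ^ 2 * κ * Real.exp (2 * Λ) by positivity)
      have h1 := hEstep m
      have heq : 8 * Real.pi ^ 2 * κ * M * R * Real.exp (2 * Λ * ((m:ℝ) + 1))
          = 8 * Real.pi ^ 2 * κ * M * R * Real.exp (2 * Λ * m)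
            + 8 * Real.pi ^ 2 * κ * Real.exp (2 * Λ) * (Real.exp (2 * Λ * m) * M) := by
        rw [hem]
        linear_combination (8 * Real.pi ^ 2 * κ * M * Real.exp (2 * Λ * (m:ℝ))) * hRe
      push_cast
      rw [heq]
      linarith
  -- conclude
  have hlast := hEbound n
  have hA1 : 1 / 2 < 8 * Real.pi ^ 2 * κ * M * R * Real.exp (2 * Λ * n) := by linarith
  have hposa : (0:ℝ) < κ * Real.exp (2 * Λ * (n:ℝ)) * (16 * Real.pi ^ 2 * R) := by positivity
  have hbig : 1 < κ * Real.exp (2 * Λ * (n:ℝ)) * (16 * Real.pi ^ 2 * (M + 1) * R) := by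
    nlinarith [hA1, hposa]
  have hgt : c < κ * Real.exp (2 * Λ * (n:ℝ)) := by
    rw [hc, div_lt_iff₀ (by positivity : (0:ℝ) < 16 * Real.pi ^ 2 * (M + 1) * R)]
    linarith [hbig]
  have hlog := Real.log_lt_log hcpos hgt
  rw [Real.log_mul (ne_of_gt hκ) (Real.exp_ne_zero _), Real.log_exp] at hlog
  have habsκ : |Real.log κ| = -Real.log κ :=
    abs_of_nonpos (Real.log_nonpos hκ.le hκ1)
  have hnegc := neg_abs_le (Real.log c)
  have h2Λ : (0:ℝ) < 2 * Λ := by linarith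
  have key : |Real.log κ| - |Real.log c| ≤ 2 * Λ * (n:ℝ) := by
    rw [habsκ]; linarith
  rw [show (1 / (2 * Λ)) * |Real.log κ| - (|Real.log c| / (2 * Λ) + 1)
      = (|Real.log κ| - |Real.log c|) / (2 * Λ) - 1 from by ring]
  have hdiv : (|Real.log κ| - |Real.log c|) / (2 * Λ) ≤ (n:ℝ) := by
    rw [div_le_iff₀ h2Λ]; linarith
  linarith
end

section
/- (Gap between decay rate and expansion rate) Suppose f : 𝕋^d → 𝕋^d is a C¹ volume-preserving diffeomorphism and there exist γ > 0 and, for each mean-zero smooth h, a constant C_h with ‖ℒ_fⁿ h‖_{H^{-1}} ≤ C_h e^{-γn} for all n ≥ 1. Then for every mean-zero smooth h ≢ 0, γ ≤ liminf_{n→∞} (1/n) log ‖ℒ_fⁿ h‖_{H¹}. In particular γ ≤ Λ := log sup_x |(Df_x)^{-1}|. -/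
/-!
Since `ℒ_f` is an `L²`-isometry, the interpolation inequality
`‖h‖²_{L²} ≤ ‖ℒ_fⁿ h‖_{H¹} ‖ℒ_fⁿ h‖_{H⁻¹}` and the decay `‖ℒ_fⁿ h‖_{H⁻¹} ≤ C e^{-γn}` force
`‖ℒ_fⁿ h‖_{H¹} ≥ (‖h‖²_{L²} / C) e^{γn}`. Taking `(1/n) log` gives the `liminf` bound, and
comparing with the growth `‖ℒ_fⁿ h‖_{H¹} ≤ e^{Λn} ‖h‖_{H¹}` gives `γ ≤ Λ`.
-/

open Filter

/-- Homogeneous H¹ energy Σ|k|²|ĥ(k)|². -/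
noncomputable def H1sq {d : ℕ} (c : (Fin d → ℤ) → ℂ) : ℝ :=
  ∑' k : Fin d → ℤ, znorm k ^ 2 * ‖c k‖ ^ 2

/-- Homogeneous H⁻¹ energy Σ_{k≠0}|k|⁻²|ĥ(k)|². -/
noncomputable def Hm1sq {d : ℕ} (c : (Fin d → ℤ) → ℂ) : ℝ :=
  ∑' k : Fin d → ℤ, ‖c k‖ ^ 2 / znorm k ^ 2

open Real Topology

lemma znorm_nonneg {d : ℕ} (k : Fin d → ℤ) : 0 ≤ znorm k :=
  sqrt_nonneg _

lemma one_le_znorm {d : ℕ} {k : Fin d → ℤ} (hk : k ≠ 0) : 1 ≤ znorm k := by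
  obtain ⟨i, hi⟩ := Function.ne_iff.mp hk
  have hki : (1 : ℝ) ≤ (k i : ℝ) ^ 2 := by
    rw [one_le_sq_iff_one_le_abs]
    exact_mod_cast Int.one_le_abs hi
  exact one_le_sqrt.mpr <|
    hki.trans (Finset.single_le_sum (fun j _ => sq_nonneg ((k j : ℝ))) (Finset.mem_univ i))

section FourierCoefficients

variable {d : ℕ} {c : (Fin d → ℤ) → ℂ}

lemma norm_sq_le_znorm_sq_mul_norm_sq (h0 : c 0 = 0) (k : Fin d → ℤ) :
    ‖c k‖ ^ 2 ≤ znorm k ^ 2 * ‖c k‖ ^ 2 := by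
  rcases eq_or_ne k 0 with rfl | hk
  · simp [h0]
  · exact le_mul_of_one_le_left (by positivity) (one_le_pow₀ (one_le_znorm hk))

lemma norm_sq_div_znorm_sq_le_norm_sq (k : Fin d → ℤ) :
    ‖c k‖ ^ 2 / znorm k ^ 2 ≤ ‖c k‖ ^ 2 := by
  rcases eq_or_ne k 0 with rfl | hk
  · simp [znorm]
  · exact div_le_self (by positivity) (one_le_pow₀ (one_le_znorm hk))

lemma summable_norm_sq_of_summable_H1 (h0 : c 0 = 0)
    (hH1 : Summable fun k => znorm k ^ 2 * ‖c k‖ ^ 2) : Summable fun k => ‖c k‖ ^ 2 :=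
  hH1.of_nonneg_of_le (fun _ => by positivity) (norm_sq_le_znorm_sq_mul_norm_sq h0)

lemma tsum_norm_sq_le_sqrt_H1sq_mul_sqrt_Hm1sq (h0 : c 0 = 0)
    (hH1 : Summable fun k => znorm k ^ 2 * ‖c k‖ ^ 2) :
    ∑' k, ‖c k‖ ^ 2 ≤ √(H1sq c) * √(Hm1sq c) := by
  have hHm1 : Summable fun k => ‖c k‖ ^ 2 / znorm k ^ 2 :=
    (summable_norm_sq_of_summable_H1 h0 hH1).of_nonneg_of_le (fun _ => by positivity)
      norm_sq_div_znorm_sq_le_norm_sq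
  have hsplit : ∀ k, ‖c k‖ ^ 2 = (znorm k * ‖c k‖) * (‖c k‖ / znorm k) := by
    intro k
    rcases eq_or_ne k 0 with rfl | hk
    · simp [h0]
    · have := (zero_lt_one.trans_le (one_le_znorm hk)).ne'
      field_simp
  have := inner_le_Lp_mul_Lq_tsum_of_nonneg HolderConjugate.two_two
    (f := fun k => znorm k * ‖c k‖) (g := fun k => ‖c k‖ / znorm k)
    (fun k => mul_nonneg (znorm_nonneg k) (norm_nonneg _))
    (fun k => div_nonneg (norm_nonneg _) (znorm_nonneg k))
  simp only [rpow_two, mul_pow, div_pow, ← sqrt_eq_rpow] at this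
  rw [tsum_congr hsplit]
  exact this hH1 hHm1

end FourierCoefficients

lemma sqrt_le_sqrt_mul_exp_of_le_exp_mul {u : ℕ → ℝ} {Λ : ℝ}
    (hu : ∀ n, u (n + 1) ≤ exp (2 * Λ) * u n) (n : ℕ) : √(u n) ≤ √(u 0) * exp (Λ * n) := by
  have hexp : exp (2 * Λ) ^ n = exp (Λ * n) ^ 2 := by
    rw [← exp_nat_mul, ← exp_nat_mul]
    ring_nf
  calc √(u n) ≤ √(exp (2 * Λ) ^ n * u 0) :=
        sqrt_le_sqrt (le_geom (exp_pos _).le n fun k _ => hu k)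
    _ = √(u 0) * exp (Λ * n) := by
        rw [hexp, sqrt_mul (sq_nonneg _), sqrt_sq (exp_pos _).le, mul_comm]

lemma tendsto_one_div_mul_log_mul_exp {K : ℝ} (hK : 0 < K) (γ : ℝ) :
    Tendsto (fun n : ℕ => 1 / (n : ℝ) * log (K * exp (γ * n))) atTop (𝓝 γ) := by
  have hlim : Tendsto (fun n : ℕ => γ + log K / n) atTop (𝓝 γ) := by
    simpa using tendsto_const_nhds.add (tendsto_const_div_atTop_nhds_zero_nat (log K))
  refine hlim.congr' ((eventually_ne_atTop 0).mono fun n hn => ?_)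
  dsimp only
  rw [log_mul hK.ne' (exp_pos _).ne', log_exp]
  field_simp
  ring

theorem le_liminf_one_div_mul_log_of_exp_bounds {a : ℕ → ℝ} {K M γ Λ : ℝ} (hK : 0 < K)
    (hlow : ∀ᶠ n : ℕ in atTop, K * exp (γ * n) ≤ a n)
    (hup : ∀ᶠ n : ℕ in atTop, a n ≤ M * exp (Λ * n)) :
    γ ≤ liminf (fun n : ℕ => 1 / (n : ℝ) * log (a n)) atTop ∧ γ ≤ Λ := by
  have hbounds := hlow.and hup
  obtain ⟨n₀, hn₀⟩ := hbounds.exists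
  have hM : 0 < M := pos_of_mul_pos_left ((by positivity : 0 < K * exp (γ * n₀)).trans_le
    (hn₀.1.trans hn₀.2)) (exp_pos _).le
  have hlog : ∀ᶠ n : ℕ in atTop, 1 / (n : ℝ) * log (K * exp (γ * n)) ≤ 1 / (n : ℝ) * log (a n)
      ∧ 1 / (n : ℝ) * log (a n) ≤ 1 / (n : ℝ) * log (M * exp (Λ * n)) := by
    refine hbounds.mono fun n ⟨hl, hu⟩ => ⟨?_, ?_⟩ <;> gcongr
    exact (by positivity : 0 < K * exp (γ * n)).trans_le hl
  have hγ := tendsto_one_div_mul_log_mul_exp hK γ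
  have hΛ := tendsto_one_div_mul_log_mul_exp hM Λ
  refine ⟨?_, le_of_tendsto_of_tendsto hγ hΛ (hlog.mono fun n h => h.1.trans h.2)⟩
  calc γ = liminf (fun n : ℕ => 1 / (n : ℝ) * log (K * exp (γ * n))) atTop := hγ.liminf_eq.symm
    _ ≤ _ := liminf_le_liminf (hlog.mono fun n h => h.1) hγ.isBoundedUnder_ge
        (hΛ.isBoundedUnder_le.mono_le (hlog.mono fun n h => h.2)).isCoboundedUnder_ge

theorem decay_rate_le_expansion_rate_general {d : ℕ} (Λ γ : ℝ)
    (c : ℕ → (Fin d → ℤ) → ℂ)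
    (hmean : ∀ n, c n 0 = 0)
    (hne : ∃ k, c 0 k ≠ 0)
    (hH1sum : ∀ n, Summable fun k : Fin d → ℤ => znorm k ^ 2 * ‖c n k‖ ^ 2)
    (hiso : ∀ n, (∑' k : Fin d → ℤ, ‖c n k‖ ^ 2) = ∑' k : Fin d → ℤ, ‖c 0 k‖ ^ 2)
    (hH1op : ∀ n, H1sq (c (n + 1)) ≤ Real.exp (2 * Λ) * H1sq (c n))
    (hdecay : ∃ C : ℝ, 0 < C ∧ ∀ n : ℕ, 1 ≤ n →
      Real.sqrt (Hm1sq (c n)) ≤ C * Real.exp (-γ * n)) :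
    γ ≤ Filter.liminf
          (fun n : ℕ => (1 / (n : ℝ)) * Real.log (Real.sqrt (H1sq (c n)))) atTop
      ∧ γ ≤ Λ := by
  obtain ⟨C, hC, hdecay⟩ := hdecay
  set L := ∑' k, ‖c 0 k‖ ^ 2
  have hL : 0 < L := by
    obtain ⟨k, hk⟩ := hne
    exact (summable_norm_sq_of_summable_H1 (hmean 0) (hH1sum 0)).tsum_pos
      (fun _ => sq_nonneg _) k (by positivity)
  have hlow : ∀ n : ℕ, 1 ≤ n → L / C * exp (γ * n) ≤ √(H1sq (c n)) := by
    intro n hn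
    have hinterp : L ≤ √(H1sq (c n)) * (C * exp (-γ * n)) := by
      rw [← hiso n]
      exact (tsum_norm_sq_le_sqrt_H1sq_mul_sqrt_Hm1sq (hmean n) (hH1sum n)).trans
        (mul_le_mul_of_nonneg_left (hdecay n hn) (sqrt_nonneg _))
    rw [div_mul_eq_mul_div, div_le_iff₀ hC]
    calc L * exp (γ * n) ≤ √(H1sq (c n)) * (C * exp (-γ * n)) * exp (γ * n) := by gcongr
      _ = √(H1sq (c n)) * C := by rw [mul_assoc, mul_assoc, ← exp_add]; simp
  exact le_liminf_one_div_mul_log_of_exp_bounds (div_pos hL hC)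
    ((eventually_ge_atTop 1).mono hlow)
    (Eventually.of_forall (sqrt_le_sqrt_mul_exp_of_le_exp_mul hH1op))

/-- gap between decay rate and expansion rate: if `c n` are the Fourier
coefficients of ℒ_fⁿ h for a mean-zero smooth h ≢ 0 and a C¹ volume-preserving
diffeomorphism f (so ℒ_f is an L²-isometry with ‖ℒ_f‖_{H¹→H¹} ≤ e^Λ), and
‖ℒ_fⁿ h‖_{H⁻¹} ≤ C_h e^{-γn} for some γ > 0, then
γ ≤ liminf (1/n) log ‖ℒ_fⁿh‖_{H¹}, and in particular γ ≤ Λ. -/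
theorem decay_rate_le_expansion_rate {d : ℕ} (Λ γ : ℝ) (hγ : 0 < γ)
    (c : ℕ → (Fin d → ℤ) → ℂ)
    (hmean : ∀ n, c n 0 = 0)
    (hne : ∃ k, c 0 k ≠ 0)
    (hH1sum : ∀ n, Summable fun k : Fin d → ℤ => znorm k ^ 2 * ‖c n k‖ ^ 2)
    (hiso : ∀ n, (∑' k : Fin d → ℤ, ‖c n k‖ ^ 2) = ∑' k : Fin d → ℤ, ‖c 0 k‖ ^ 2)
    (hH1op : ∀ n, H1sq (c (n + 1)) ≤ Real.exp (2 * Λ) * H1sq (c n))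
    (hdecay : ∃ C : ℝ, 0 < C ∧ ∀ n : ℕ, 1 ≤ n →
      Real.sqrt (Hm1sq (c n)) ≤ C * Real.exp (-γ * n)) :
    γ ≤ Filter.liminf
          (fun n : ℕ => (1 / (n : ℝ)) * Real.log (Real.sqrt (H1sq (c n)))) atTop
      ∧ γ ≤ Λ :=
  decay_rate_le_expansion_rate_general Λ γ c hmean hne hH1sum hiso hH1op hdecay
end
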